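/- arXiv:2411.17331 — 2 statements merged into one kernel-verified Lean document; each statement's English description precedes it below -/
import Mathlib

section
/- The weighted bottleneck distance is symmetric and satisfies the triangle inequality on finite weighted persistence diagrams. -/
/-- A weighted diagram point is a pair `((a,b), w)`: an interval with a weight. -/
abbrev WPoint : Type := (ℝ × ℝ) × ℝ

/-- Cost of matching two weighted points: `max(|c−a|, |d−b|, |w₁−w₂|)`. -/
noncomputable def pairCost (p q : WPoint) : ℝ :=
  max (max |q.1.1 - p.1.1| |q.1.2 - p.1.2|) |q.2 - p.2|

/-- Cost of leaving a weighted point `((a,b), w)` unmatched: `(b − a)/2`. -/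
noncomputable def unCost (p : WPoint) : ℝ := (p.1.2 - p.1.1) / 2

/-- A matching, encoded as a partial injection `ι → Option κ`. -/
def IsMatching {ι κ : Type*} (mch : ι → Option κ) : Prop :=
  ∀ i i' k, mch i = some k → mch i' = some k → i = i'

/-- The cost of a matching: supremum of the matched-pair costs and the
unmatched costs on both sides. -/
noncomputable def matchingCost {ι κ : Type*} (C : ι → WPoint) (D : κ → WPoint)
    (mch : ι → Option κ) : ℝ :=
  sSup ({c : ℝ | ∃ i k, mch i = some k ∧ c = pairCost (C i) (D k)}
      ∪ {c : ℝ | ∃ i, mch i = none ∧ c = unCost (C i)}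
      ∪ {c : ℝ | ∃ k, (∀ i, mch i ≠ some k) ∧ c = unCost (D k)})

/-- The weighted bottleneck distance: infimum of costs over matchings. -/
noncomputable def bottleneckDist {ι κ : Type*} (C : ι → WPoint) (D : κ → WPoint) : ℝ :=
  sInf {c : ℝ | ∃ mch : ι → Option κ, IsMatching mch ∧ c = matchingCost C D mch}

-- aux lemmas
lemma pairCost_comm (p q : WPoint) : pairCost p q = pairCost q p := by
  simp [pairCost, abs_sub_comm]

lemma pairCost_nonneg (p q : WPoint) : 0 ≤ pairCost p q :=
  le_trans (abs_nonneg _) (le_max_right _ _)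

lemma unCost_nonneg {p : WPoint} (h : p.1.1 ≤ p.1.2) : 0 ≤ unCost p := by
  simp only [unCost]; linarith

lemma pairCost_triangle (p q r : WPoint) : pairCost p r ≤ pairCost p q + pairCost q r := by
  have h1 : |q.1.1 - p.1.1| ≤ pairCost p q := le_trans (le_max_left _ _) (le_max_left _ _)
  have h2 : |q.1.2 - p.1.2| ≤ pairCost p q := le_trans (le_max_right _ _) (le_max_left _ _)
  have h3 : |q.2 - p.2| ≤ pairCost p q := le_max_right _ _
  have h4 : |r.1.1 - q.1.1| ≤ pairCost q r := le_trans (le_max_left _ _) (le_max_left _ _)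
  have h5 : |r.1.2 - q.1.2| ≤ pairCost q r := le_trans (le_max_right _ _) (le_max_left _ _)
  have h6 : |r.2 - q.2| ≤ pairCost q r := le_max_right _ _
  refine max_le (max_le ?_ ?_) ?_
  · calc |r.1.1 - p.1.1| ≤ |r.1.1 - q.1.1| + |q.1.1 - p.1.1| := abs_sub_le _ _ _
      _ ≤ pairCost p q + pairCost q r := by linarith
  · calc |r.1.2 - p.1.2| ≤ |r.1.2 - q.1.2| + |q.1.2 - p.1.2| := abs_sub_le _ _ _
      _ ≤ pairCost p q + pairCost q r := by linarith
  · calc |r.2 - p.2| ≤ |r.2 - q.2| + |q.2 - p.2| := abs_sub_le _ _ _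
      _ ≤ pairCost p q + pairCost q r := by linarith

lemma unCost_le (p q : WPoint) : unCost p ≤ unCost q + pairCost p q := by
  have h1 : |q.1.1 - p.1.1| ≤ pairCost p q := le_trans (le_max_left _ _) (le_max_left _ _)
  have h2 : |q.1.2 - p.1.2| ≤ pairCost p q := le_trans (le_max_right _ _) (le_max_left _ _)
  have h1' := abs_le.mp (le_refl |q.1.1 - p.1.1|)
  have h2' := abs_le.mp (le_refl |q.1.2 - p.1.2|)
  simp only [unCost]
  have := h1'.1; have := h1'.2; have := h2'.1; have := h2'.2
  linarith

lemma costSet_bddAbove {ι κ : Type*} [Fintype ι] [Fintype κ] (C : ι → WPoint)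
    (D : κ → WPoint) (mch : ι → Option κ) :
    BddAbove ({c : ℝ | ∃ i k, mch i = some k ∧ c = pairCost (C i) (D k)}
      ∪ {c : ℝ | ∃ i, mch i = none ∧ c = unCost (C i)}
      ∪ {c : ℝ | ∃ k, (∀ i, mch i ≠ some k) ∧ c = unCost (D k)}) := by
  apply Set.Finite.bddAbove
  refine Set.Finite.union (Set.Finite.union ?_ ?_) ?_
  · exact (Set.finite_range (fun p : ι × κ => pairCost (C p.1) (D p.2))).subset
      (by rintro c ⟨i, k, -, rfl⟩; exact ⟨(i, k), rfl⟩)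
  · exact (Set.finite_range (fun i => unCost (C i))).subset
      (by rintro c ⟨i, -, rfl⟩; exact ⟨i, rfl⟩)
  · exact (Set.finite_range (fun k => unCost (D k))).subset
      (by rintro c ⟨k, -, rfl⟩; exact ⟨k, rfl⟩)

lemma matchingCost_nonneg {ι κ : Type*} (C : ι → WPoint) (D : κ → WPoint)
    (hC : ∀ i, (C i).1.1 ≤ (C i).1.2) (hD : ∀ k, (D k).1.1 ≤ (D k).1.2)
    (mch : ι → Option κ) : 0 ≤ matchingCost C D mch := by
  apply Real.sSup_nonneg
  rintro c ((⟨i, k, -, rfl⟩ | ⟨i, -, rfl⟩) | ⟨k, -, rfl⟩)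
  · exact pairCost_nonneg _ _
  · exact unCost_nonneg (hC i)
  · exact unCost_nonneg (hD k)

lemma pair_le_matchingCost {ι κ : Type*} [Fintype ι] [Fintype κ] (C : ι → WPoint)
    (D : κ → WPoint) (mch : ι → Option κ) {i k} (h : mch i = some k) :
    pairCost (C i) (D k) ≤ matchingCost C D mch :=
  le_csSup (costSet_bddAbove C D mch) (Or.inl (Or.inl ⟨i, k, h, rfl⟩))

lemma unL_le_matchingCost {ι κ : Type*} [Fintype ι] [Fintype κ] (C : ι → WPoint)
    (D : κ → WPoint) (mch : ι → Option κ) {i} (h : mch i = none) :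
    unCost (C i) ≤ matchingCost C D mch :=
  le_csSup (costSet_bddAbove C D mch) (Or.inl (Or.inr ⟨i, h, rfl⟩))

lemma unR_le_matchingCost {ι κ : Type*} [Fintype ι] [Fintype κ] (C : ι → WPoint)
    (D : κ → WPoint) (mch : ι → Option κ) {k} (h : ∀ i, mch i ≠ some k) :
    unCost (D k) ≤ matchingCost C D mch :=
  le_csSup (costSet_bddAbove C D mch) (Or.inr ⟨k, h, rfl⟩)

open Classical in
noncomputable def revMatch {ι κ : Type*} (mch : ι → Option κ) : κ → Option ι :=
  fun k => if h : ∃ i, mch i = some k then some h.choose else none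

lemma revMatch_some {ι κ : Type*} {mch : ι → Option κ} (hm : IsMatching mch) {i k} :
    revMatch mch k = some i ↔ mch i = some k := by
  constructor
  · intro h
    unfold revMatch at h
    split_ifs at h with he
    · obtain rfl : he.choose = i := Option.some.inj h
      exact he.choose_spec
  · intro h
    have he : ∃ i, mch i = some k := ⟨i, h⟩
    unfold revMatch
    rw [dif_pos he]
    exact congrArg some (hm _ _ _ he.choose_spec h)

lemma revMatch_none {ι κ : Type*} {mch : ι → Option κ} {k} :
    revMatch mch k = none ↔ ∀ i, mch i ≠ some k := by
  unfold revMatch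
  split_ifs with he
  · refine iff_of_false (by simp) ?_
    intro h
    exact h he.choose he.choose_spec
  · push_neg at he
    simp [he]

lemma revMatch_isMatching {ι κ : Type*} {mch : ι → Option κ} (hm : IsMatching mch) :
    IsMatching (revMatch mch) := by
  intro k k' i h h'
  have h1 := (revMatch_some hm).mp h
  have h2 := (revMatch_some hm).mp h'
  exact Option.some.inj (h1 ▸ h2)

lemma matchingCost_rev {ι κ : Type*} (C : ι → WPoint) (D : κ → WPoint)
    (mch : ι → Option κ) (hm : IsMatching mch) :
    matchingCost D C (revMatch mch) = matchingCost C D mch := by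
  unfold matchingCost
  congr 1
  ext c
  simp only [Set.mem_union, Set.mem_setOf_eq]
  constructor
  · rintro ((⟨k, i, h, rfl⟩ | ⟨k, h, rfl⟩) | ⟨i, h, rfl⟩)
    · exact Or.inl (Or.inl ⟨i, k, (revMatch_some hm).mp h, pairCost_comm _ _⟩)
    · exact Or.inr ⟨k, revMatch_none.mp h, rfl⟩
    · refine Or.inl (Or.inr ⟨i, ?_, rfl⟩)
      rcases hmi : mch i with _ | k
      · rfl
      · exact absurd ((revMatch_some hm).mpr hmi) (h k)
  · rintro ((⟨i, k, h, rfl⟩ | ⟨i, h, rfl⟩) | ⟨k, h, rfl⟩)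
    · exact Or.inl (Or.inl ⟨k, i, (revMatch_some hm).mpr h, pairCost_comm _ _⟩)
    · refine Or.inr ⟨i, ?_, rfl⟩
      intro k hk
      rw [(revMatch_some hm).mp hk] at h
      cases h
    · exact Or.inl (Or.inr ⟨k, revMatch_none.mpr h, rfl⟩)

lemma bottleneck_symm {ι κ : Type*} (C : ι → WPoint) (D : κ → WPoint) :
    bottleneckDist C D = bottleneckDist D C := by
  unfold bottleneckDist
  congr 1
  ext c
  simp only [Set.mem_setOf_eq]
  constructor
  · rintro ⟨m, hm, rfl⟩
    exact ⟨revMatch m, revMatch_isMatching hm, (matchingCost_rev C D m hm).symm⟩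
  · rintro ⟨m, hm, rfl⟩
    exact ⟨revMatch m, revMatch_isMatching hm, (matchingCost_rev D C m hm).symm⟩

lemma comp_isMatching {ι κ μ : Type*} {m1 : ι → Option κ} {m2 : κ → Option μ}
    (h1 : IsMatching m1) (h2 : IsMatching m2) :
    IsMatching (fun i => (m1 i).bind m2) := by
  intro i i' j hi hi'
  have hi2 : (m1 i).bind m2 = some j := hi
  have hi2' : (m1 i').bind m2 = some j := hi'
  rcases hk : m1 i with _ | k
  · rw [hk] at hi2; cases hi2
  rcases hk' : m1 i' with _ | k'
  · rw [hk'] at hi2'; cases hi2'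
  rw [hk] at hi2; rw [hk'] at hi2'
  replace hi2 : m2 k = some j := hi2
  replace hi2' : m2 k' = some j := hi2'
  obtain rfl := h2 _ _ _ hi2 hi2'
  exact h1 _ _ _ hk hk'

lemma matchingCost_comp_le {ι κ μ : Type*} [Fintype ι] [Fintype κ] [Fintype μ]
    (C : ι → WPoint) (D : κ → WPoint) (E : μ → WPoint)
    (hC : ∀ i, (C i).1.1 ≤ (C i).1.2) (hD : ∀ k, (D k).1.1 ≤ (D k).1.2)
    (hE : ∀ j, (E j).1.1 ≤ (E j).1.2)
    (m1 : ι → Option κ) (m2 : κ → Option μ) :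
    matchingCost C E (fun i => (m1 i).bind m2) ≤
      matchingCost C D m1 + matchingCost D E m2 := by
  have hn1 := matchingCost_nonneg C D hC hD m1
  have hn2 := matchingCost_nonneg D E hD hE m2
  apply Real.sSup_le _ (by linarith)
  rintro c ((⟨i, j, hij, rfl⟩ | ⟨i, hi, rfl⟩) | ⟨j, hj, rfl⟩)
  · replace hij : (m1 i).bind m2 = some j := hij
    rcases hk : m1 i with _ | k
    · rw [hk] at hij; cases hij
    rw [hk] at hij
    replace hij : m2 k = some j := hij
    calc pairCost (C i) (E j) ≤ pairCost (C i) (D k) + pairCost (D k) (E j) :=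
          pairCost_triangle _ _ _
      _ ≤ _ := add_le_add (pair_le_matchingCost C D m1 hk)
          (pair_le_matchingCost D E m2 hij)
  · replace hi : (m1 i).bind m2 = none := hi
    rcases hk : m1 i with _ | k
    · calc unCost (C i) ≤ matchingCost C D m1 := unL_le_matchingCost C D m1 hk
        _ ≤ _ := by linarith
    · rw [hk] at hi
      replace hi : m2 k = none := hi
      calc unCost (C i) ≤ unCost (D k) + pairCost (C i) (D k) := unCost_le _ _
        _ ≤ matchingCost D E m2 + matchingCost C D m1 :=
            add_le_add (unL_le_matchingCost D E m2 hi) (pair_le_matchingCost C D m1 hk)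
        _ = _ := add_comm _ _
  · by_cases hex : ∃ k, m2 k = some j
    · obtain ⟨k, hk⟩ := hex
      have hknot : ∀ i, m1 i ≠ some k := by
        intro i hi
        exact hj i (show (m1 i).bind m2 = some j by rw [hi]; simpa using hk)
      calc unCost (E j) ≤ unCost (D k) + pairCost (E j) (D k) := unCost_le _ _
        _ = unCost (D k) + pairCost (D k) (E j) := by rw [pairCost_comm]
        _ ≤ _ := add_le_add (unR_le_matchingCost C D m1 hknot)
            (pair_le_matchingCost D E m2 hk)
    · push_neg at hex
      calc unCost (E j) ≤ matchingCost D E m2 := unR_le_matchingCost D E m2 hex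
        _ ≤ _ := by linarith


/-- The weighted bottleneck distance on finite weighted
persistence diagrams is symmetric and satisfies the triangle inequality. -/
theorem bottleneck_symm_triangle {ι κ μ : Type*} [Fintype ι] [Fintype κ] [Fintype μ]
    (C : ι → WPoint) (D : κ → WPoint) (E : μ → WPoint)
    (hC : ∀ i, (C i).1.1 ≤ (C i).1.2) (hD : ∀ k, (D k).1.1 ≤ (D k).1.2)
    (hE : ∀ j, (E j).1.1 ≤ (E j).1.2) :
    bottleneckDist C D = bottleneckDist D C ∧
    bottleneckDist C E ≤ bottleneckDist C D + bottleneckDist D E := by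
  refine ⟨bottleneck_symm C D, ?_⟩
  set S1 := {c : ℝ | ∃ mch : ι → Option κ, IsMatching mch ∧ c = matchingCost C D mch} with hS1
  set S2 := {c : ℝ | ∃ mch : κ → Option μ, IsMatching mch ∧ c = matchingCost D E mch} with hS2
  have hS1ne : S1.Nonempty := by
    refine ⟨matchingCost C D (fun _ => none), fun _ => none, ?_, rfl⟩
    intro i i' k h
    cases h
  have hS2ne : S2.Nonempty := by
    refine ⟨matchingCost D E (fun _ => none), fun _ => none, ?_, rfl⟩
    intro i i' k h
    cases h
  have key : ∀ c1 ∈ S1, ∀ c2 ∈ S2, bottleneckDist C E ≤ c1 + c2 := by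
    rintro c1 ⟨m1, hm1, rfl⟩ c2 ⟨m2, hm2, rfl⟩
    have hle := matchingCost_comp_le C D E hC hD hE m1 m2
    have hmem : matchingCost C E (fun i => (m1 i).bind m2) ∈
        {c : ℝ | ∃ mch : ι → Option μ, IsMatching mch ∧ c = matchingCost C E mch} :=
      ⟨_, comp_isMatching hm1 hm2, rfl⟩
    have hbdd : BddBelow {c : ℝ | ∃ mch : ι → Option μ, IsMatching mch ∧ c = matchingCost C E mch} := by
      refine ⟨0, ?_⟩
      rintro c ⟨m, -, rfl⟩
      exact matchingCost_nonneg C E hC hE m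
    calc bottleneckDist C E ≤ matchingCost C E (fun i => (m1 i).bind m2) :=
          csInf_le hbdd hmem
      _ ≤ _ := hle
  have h2 : ∀ c2 ∈ S2, bottleneckDist C E - c2 ≤ sInf S1 := by
    intro c2 hc2
    refine le_csInf hS1ne fun c1 hc1 => ?_
    linarith [key c1 hc1 c2 hc2]
  have h3 : bottleneckDist C E - sInf S1 ≤ sInf S2 := by
    refine le_csInf hS2ne fun c2 hc2 => ?_
    linarith [h2 c2 hc2]
  have e1 : bottleneckDist C D = sInf S1 := rfl
  have e2 : bottleneckDist D E = sInf S2 := rfl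
  rw [e1, e2]
  linarith
end

section
/- In the circular representation of a segment cycle containing 2k endpoints, starting from a and alternately applying Ŝ and L̂ visits all 2k elements of Seg(a) before returning to a; equivalently, the permutation obtained by alternating Ŝ and L̂ acts transitively on Seg(a). -/
/-!
Write `T = L̂ Ŝ`. The even terms of the sequence are `Tᵗ a` and the odd terms are `L̂ (Tᵗ⁺¹ a)`.
Since `L̂` conjugates `T` to `T⁻¹`, it maps `Orb(a)` onto `Orb(L̂ a)`, and `L̂ a ∉ Orb(a)`:
`L̂ a = T²ᵐ a` would make `Tᵐ a` a fixed point of `L̂`, and `L̂ a = T²ᵐ⁺¹ a` one of `Ŝ`.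
So `Seg(a)` is the disjoint union of two orbits whose size is the minimal period `p` of `a`
under `T`, whence `p = k`. The first `2k` terms are then distinct (even and odd terms lie in
different orbits), so they exhaust `Seg(a)`, and the sequence returns to `Tᵏ a = a`.
-/

open Function Set

theorem mul_zpow_of_conj_eq_inv {G : Type*} [Group G] {a b : G} (h : a * b * a⁻¹ = b⁻¹) (m : ℤ) :
    a * b ^ m = b ^ (-m) * a := by
  rw [zpow_neg, ← inv_zpow, ← h, conj_zpow, inv_mul_cancel_right]

theorem conj_mul_eq_inv_of_mul_self_eq_one {G : Type*} [Group G] {l s : G} (hl : l * l = 1)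
    (hs : s * s = 1) : l * (l * s) * l⁻¹ = (l * s)⁻¹ := by
  rw [inv_eq_of_mul_eq_one_left hl, mul_inv_rev, inv_eq_of_mul_eq_one_left hl,
    inv_eq_of_mul_eq_one_left hs, ← mul_assoc, hl, one_mul]

theorem Set.injOn_Iio_two_mul_of_disjoint {α : Type*} {u : ℕ → α} {n : ℕ} {A B : Set α}
    (hAB : Disjoint A B) (heven : InjOn (fun t => u (2 * t)) (Iio n))
    (hodd : InjOn (fun t => u (2 * t + 1)) (Iio n))
    (hA : ∀ t, u (2 * t) ∈ A) (hB : ∀ t, u (2 * t + 1) ∈ B) : InjOn u (Iio (2 * n)) := by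
  intro i hi j hj hij
  simp only [mem_Iio] at hi hj
  obtain ⟨s, rfl | rfl⟩ := i.even_or_odd' <;> obtain ⟨t, rfl | rfl⟩ := j.even_or_odd'
  · rw [heven (by simp; omega) (by simp; omega) hij]
  · exact (hAB.ne_of_mem (hA s) (hB t) hij).elim
  · exact (hAB.ne_of_mem (hA t) (hB s) hij.symm).elim
  · rw [hodd (by simp; omega) (by simp; omega) hij]

namespace Equiv.Perm

variable {α : Type*}

def zpowOrbit (f : Perm α) (x : α) : Set α := {y | ∃ m : ℤ, y = (f ^ m) x}

theorem pow_apply_mem_zpowOrbit (f : Perm α) (x : α) (n : ℕ) : (f ^ n) x ∈ zpowOrbit f x :=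
  ⟨n, by rw [zpow_natCast]⟩

theorem ncard_zpowOrbit [Finite α] (f : Perm α) (x : α) :
    (zpowOrbit f x).ncard = minimalPeriod f x := by
  have hpos : (0 : ℤ) < minimalPeriod f x := mod_cast (MulAction.minimalPeriod_pos f x).pos
  have himage : zpowOrbit f x = (fun n : ℕ => f^[n] x) '' Iio (minimalPeriod f x) := by
    refine Subset.antisymm ?_ ?_
    · rintro y ⟨m, rfl⟩
      have hlt := Int.emod_lt_of_pos m hpos
      refine ⟨(m % minimalPeriod f x).toNat, by simp only [mem_Iio]; omega, ?_⟩
      dsimp only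
      rw [iterate_eq_pow, ← zpow_natCast, Int.toNat_of_nonneg (Int.emod_nonneg m hpos.ne')]
      exact MulAction.zpow_smul_mod_minimalPeriod f x m
    · rintro y ⟨n, -, rfl⟩
      exact ⟨n, by dsimp only; rw [zpow_natCast, iterate_eq_pow]⟩
  rw [himage, iterate_injOn_Iio_minimalPeriod.ncard_image, ncard_Iio_nat]

theorem image_zpowOrbit_of_conj_eq_inv {σ f : Perm α} (h : σ * f * σ⁻¹ = f⁻¹) (x : α) :
    σ '' zpowOrbit f x = zpowOrbit f (σ x) := by
  have hσ (m : ℤ) (y : α) : σ ((f ^ m) y) = (f ^ (-m)) (σ y) :=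
    congrArg (· y) (mul_zpow_of_conj_eq_inv h m)
  refine Subset.antisymm ?_ ?_
  · rintro _ ⟨_, ⟨m, rfl⟩, rfl⟩
    exact ⟨-m, hσ m x⟩
  · rintro _ ⟨m, rfl⟩
    exact ⟨(f ^ (-m)) x, ⟨-m, rfl⟩, by rw [hσ, neg_neg]⟩

theorem disjoint_zpowOrbit {f : Perm α} {x y : α} (h : y ∉ zpowOrbit f x) :
    _root_.Disjoint (zpowOrbit f x) (zpowOrbit f y) := by
  refine disjoint_left.2 ?_
  rintro _ ⟨m, rfl⟩ ⟨n, hn⟩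
  refine h ⟨-n + m, ?_⟩
  rw [zpow_add, mul_apply, hn, ← mul_apply, ← zpow_add, neg_add_cancel, zpow_zero, one_apply]

section Involutions

variable {L S : Perm α}

theorem image_zpowOrbit_mul_of_involutions (hL : L * L = 1) (hS : S * S = 1) (x : α) :
    L '' zpowOrbit (L * S) x = zpowOrbit (L * S) (L x) :=
  image_zpowOrbit_of_conj_eq_inv (conj_mul_eq_inv_of_mul_self_eq_one hL hS) x

theorem apply_notMem_zpowOrbit_mul (hL : L * L = 1) (hS : S * S = 1) (hLfix : ∀ x, L x ≠ x) (hSfix : ∀ x, S x ≠ x) (x : α) :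
    L x ∉ zpowOrbit (L * S) x := by
  have hL' (m : ℤ) (y : α) : L (((L * S) ^ m) y) = ((L * S) ^ (-m)) (L y) :=
    congrArg (· y) (mul_zpow_of_conj_eq_inv (conj_mul_eq_inv_of_mul_self_eq_one hL hS) m)
  rintro ⟨j, hj⟩
  obtain ⟨m, rfl | rfl⟩ := j.even_or_odd'
  · refine hLfix (((L * S) ^ m) x) ?_
    rw [hL', hj, ← mul_apply, ← zpow_add]
    congr 3; ring
  · refine hSfix (((L * S) ^ m) x) ?_
    have : L (((L * S) ^ m) x) = L (S (((L * S) ^ m) x)) := by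
      rw [hL', hj, ← mul_apply, ← zpow_add, show -m + (2 * m + 1) = 1 + m by ring, zpow_add,
        zpow_one]
      rfl
    exact (L.injective this).symm

end Involutions

structure IsAlternating (L S : Perm α) (u : ℕ → α) : Prop where
  odd : ∀ t, u (2 * t + 1) = S (u (2 * t))
  even : ∀ t, u (2 * t + 2) = L (u (2 * t + 1))

namespace IsAlternating

variable {L S : Perm α} {u : ℕ → α}

theorem apply_two_mul (hu : IsAlternating L S u) (t : ℕ) : u (2 * t) = ((L * S) ^ t) (u 0) := by
  induction t with
  | zero => rfl
  | succ t ih => rw [Nat.mul_succ, hu.even, hu.odd, ih, pow_succ', mul_apply]; rfl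

theorem apply_two_mul_add_one (hu : IsAlternating L S u) (hL : L * L = 1) (t : ℕ) :
    u (2 * t + 1) = L (((L * S) ^ (t + 1)) (u 0)) := by
  rw [hu.odd, hu.apply_two_mul, pow_succ', mul_apply]
  exact (Equiv.congr_fun hL _).symm

theorem apply_two_mul_mem (hu : IsAlternating L S u) (t : ℕ) :
    u (2 * t) ∈ zpowOrbit (L * S) (u 0) :=
  hu.apply_two_mul t ▸ pow_apply_mem_zpowOrbit _ _ t

theorem apply_two_mul_add_one_mem (hu : IsAlternating L S u) (hL : L * L = 1) (hS : S * S = 1)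
    (t : ℕ) : u (2 * t + 1) ∈ zpowOrbit (L * S) (L (u 0)) := by
  rw [hu.apply_two_mul_add_one hL, ← image_zpowOrbit_mul_of_involutions hL hS]
  exact mem_image_of_mem L (pow_apply_mem_zpowOrbit _ _ (t + 1))

theorem mem_union (hu : IsAlternating L S u) (hL : L * L = 1) (hS : S * S = 1) (i : ℕ) :
    u i ∈ zpowOrbit (L * S) (u 0) ∪ zpowOrbit (L * S) (L (u 0)) := by
  obtain ⟨t, rfl | rfl⟩ := i.even_or_odd'
  exacts [Or.inl (hu.apply_two_mul_mem t), Or.inr (hu.apply_two_mul_add_one_mem hL hS t)]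

theorem injOn_Iio (hu : IsAlternating L S u) (hL : L * L = 1) (hS : S * S = 1)
    (h : L (u 0) ∉ zpowOrbit (L * S) (u 0)) :
    InjOn u (Iio (2 * minimalPeriod (L * S) (u 0))) := by
  have heven : InjOn (fun t => u (2 * t)) (Iio (minimalPeriod (L * S) (u 0))) :=
    fun s hs t ht hst => iterate_injOn_Iio_minimalPeriod hs ht <| by
      dsimp only at hst ⊢
      rwa [hu.apply_two_mul, hu.apply_two_mul] at hst
  refine injOn_Iio_two_mul_of_disjoint (disjoint_zpowOrbit h) heven ?_ hu.apply_two_mul_mem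
    (hu.apply_two_mul_add_one_mem hL hS)
  exact fun s hs t ht hst => heven hs ht <| S.injective <| by
    dsimp only at hst ⊢
    rwa [hu.odd, hu.odd] at hst

end IsAlternating

end Equiv.Perm

open Equiv.Perm in
theorem segment_cycle_traversal_general {G : Type*} [Fintype G]
    (L S : Equiv.Perm G) (hL2 : L * L = 1) (hS2 : S * S = 1)
    (hLfpf : ∀ x, L x ≠ x) (hSfpf : ∀ x, S x ≠ x)
    (a : G) (k : ℕ)
    (seq : ℕ → G) (hseq0 : seq 0 = a)
    (hodd : ∀ t, seq (2 * t + 1) = S (seq (2 * t)))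
    (heven : ∀ t, seq (2 * t + 2) = L (seq (2 * t + 1)))
    (hcard : (({x | ∃ m : ℤ, x = ((L * S) ^ m) a} ∪
               {x | ∃ m : ℤ, x = ((L * S) ^ m) (L a)} : Set G)).ncard = 2 * k) :
    Set.InjOn seq (Set.Iio (2 * k)) ∧
    seq '' (Set.Iio (2 * k)) =
      ({x | ∃ m : ℤ, x = ((L * S) ^ m) a} ∪
       {x | ∃ m : ℤ, x = ((L * S) ^ m) (L a)} : Set G) ∧
    seq (2 * k) = a := by
  change (zpowOrbit (L * S) a ∪ zpowOrbit (L * S) (L a)).ncard = 2 * k at hcard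
  change _ ∧ _ = zpowOrbit (L * S) a ∪ zpowOrbit (L * S) (L a) ∧ _
  subst hseq0
  have hu : IsAlternating L S seq := ⟨hodd, heven⟩
  have hnotMem := apply_notMem_zpowOrbit_mul hL2 hS2 hLfpf hSfpf (seq 0)
  have hk : minimalPeriod (L * S) (seq 0) = k := by
    rw [ncard_union_eq (disjoint_zpowOrbit hnotMem), ← image_zpowOrbit_mul_of_involutions hL2 hS2,
      L.injective.injOn.ncard_image, ncard_zpowOrbit] at hcard
    omega
  subst hk
  have hinj := hu.injOn_Iio hL2 hS2 hnotMem
  refine ⟨hinj, eq_of_subset_of_ncard_le ?_ ?_ (toFinite _), ?_⟩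
  · rintro _ ⟨i, -, rfl⟩
    exact hu.mem_union hL2 hS2 i
  · rw [hcard, hinj.ncard_image, ncard_Iio_nat]
  · rw [hu.apply_two_mul]
    exact iterate_minimalPeriod

/-- In the circular representation of a segment cycle with `2k`
endpoints, the sequence obtained from `a` by alternately applying `Ŝ` and `L̂`
visits every element of `Seg(a) = Orb(a) ∪ Orb(L̂ a)` exactly once before
returning to `a` after `2k` steps. -/
theorem segment_cycle_traversal {G : Type*} [Fintype G] [DecidableEq G]
    (L S : Equiv.Perm G) (hL2 : L * L = 1) (hS2 : S * S = 1)
    (hLfpf : ∀ x, L x ≠ x) (hSfpf : ∀ x, S x ≠ x)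
    (a : G) (k : ℕ) (hk : 0 < k)
    (seq : ℕ → G) (hseq0 : seq 0 = a)
    (hodd : ∀ t, seq (2 * t + 1) = S (seq (2 * t)))
    (heven : ∀ t, seq (2 * t + 2) = L (seq (2 * t + 1)))
    (hcard : (({x | ∃ m : ℤ, x = ((L * S) ^ m) a} ∪
               {x | ∃ m : ℤ, x = ((L * S) ^ m) (L a)} : Set G)).ncard = 2 * k) :
    Set.InjOn seq (Set.Iio (2 * k)) ∧
    seq '' (Set.Iio (2 * k)) =
      ({x | ∃ m : ℤ, x = ((L * S) ^ m) a} ∪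
       {x | ∃ m : ℤ, x = ((L * S) ^ m) (L a)} : Set G) ∧
    seq (2 * k) = a :=
  segment_cycle_traversal_general L S hL2 hS2 hLfpf hSfpf a k seq hseq0 hodd heven hcard
end
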